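/- arXiv:0801.0079 — 2 statements merged into one kernel-verified Lean document; each statement's English description precedes it below -/
import Mathlib

section
/- (Key step of Theorem 2, equation (2.17): invariance of SDMMSA under one PAVA pooling step) Suppose Ȳ_j > Ȳ_{j+1} for some j ∈ [1,k−1]. Let j_l be the smallest integer such that Ȳ_i = Ȳ_j for all i ∈ [j_l, j], and let j_u be the largest integer such that Ȳ_i = Ȳ_{j+1} for all i ∈ [j+1, j_u]. Define a new data vector (a_1,…,a_k) by a_i = Ȳ_i for i ∉ [j_l, j_u] and a_i = Ȳ_{j_l,j_u} = (Σ_{v=j_l}^{j_u} n_v Ȳ_v)/(Σ_{v=j_l}^{j_u} n_v) for i ∈ [j_l, j_u]. Then the SDMMSA estimates (with the same weights n_1,…,n_k) are unchanged: μ̂_i(Ȳ_1,…,Ȳ_k) = μ̂_i(a_1,…,a_k) for every i ∈ [1,k]. -/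
open Finset

noncomputable section SDMMSA

/-- Pooled weight `n_{i,j} = ∑_{h=i}^j n_h`. -/
def pooledWeight (n : ℕ → ℝ) (i j : ℕ) : ℝ := ∑ h ∈ Finset.Icc i j, n h

/-- Pooled (weighted) mean `Ȳ_{i,j} = (∑_{h=i}^j n_h Y_h) / n_{i,j}`. -/
def pooledMean (n Y : ℕ → ℝ) (i j : ℕ) : ℝ :=
  (∑ h ∈ Finset.Icc i j, n h * Y h) / pooledWeight n i j

/-- The first SDMMSA index for the data `(Y_1,n_1),…,(Y_t,n_t)`:
the smallest `j ∈ [1,t]` at which `Ȳ_{j,t} = max_{1 ≤ j' ≤ t} Ȳ_{j',t}`. -/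
def firstIdx (n Y : ℕ → ℝ) (t : ℕ) : ℕ :=
  sInf {j | 1 ≤ j ∧ j ≤ t ∧ ∀ j', 1 ≤ j' → j' ≤ t → pooledMean n Y j' t ≤ pooledMean n Y j t}

/-- Fuel-based recursion implementing the SDMMSA step-down procedure: on data range `[1,t]`,
every `i ≥ i₁ = firstIdx n Y t` gets the pooled mean `Ȳ_{i₁,t}` of the top block, and for
`i < i₁` we recurse on the data range `[1, i₁ - 1]`.  A fuel of `t` suffices since the
range shrinks strictly at each step. -/
def sdmmsaAux (n Y : ℕ → ℝ) : ℕ → ℕ → ℕ → ℝ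
  | 0, _, _ => 0
  | fuel + 1, t, i =>
      if firstIdx n Y t ≤ i then pooledMean n Y (firstIdx n Y t) t
      else sdmmsaAux n Y fuel (firstIdx n Y t - 1) i

/-- `muhat n Y k i` is the SDMMSA estimate `μ̂_i` computed from the data
`(Y_1,n_1),…,(Y_k,n_k)`. -/
def muhat (n Y : ℕ → ℝ) (k i : ℕ) : ℝ := sdmmsaAux n Y k k i

/-- The SDMMSA indices `i_u` computed from the data `(Y_1,n_1),…,(Y_k,n_k)`:
`sdIdx n Y k 0 = i_0 = k+1` and `i_{u+1}` is the first SDMMSA index of `[1, i_u - 1]`. -/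
def sdIdx (n Y : ℕ → ℝ) (k : ℕ) : ℕ → ℕ
  | 0 => k + 1
  | u + 1 => firstIdx n Y (sdIdx n Y k u - 1)

/-- The number of steps `h` of the SDMMSA: the first `u` with `i_u = 1`. -/
def sdSteps (n Y : ℕ → ℝ) (k : ℕ) : ℕ := sInf {u | sdIdx n Y k u = 1}

end SDMMSA

/-!
Pooling a block `[l, u]` on which the data are non-increasing changes no pooled mean `Ȳ_{i,t}`
whose window `[i, t]` contains the block or misses it. On a range `[1, t]` with `t < l` or
`u ≤ t`, no index `x ∈ (l, u]` can be the first maximiser of `i ↦ Ȳ_{i,t}`, neither for the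
original nor for the pooled data: the tail mean `Ȳ_{x,u}` is at most the head mean `Ȳ_{l,x-1}`,
so `Ȳ_{x,t}` is either below `Ȳ_{u+1,t}` or at most `Ȳ_{l,t}`. The two maximisations therefore
agree on the remaining indices, pick the same `i₁ ∉ (l, u]`, and the next range `[1, i₁ - 1]`
again misses or contains the block.
-/

noncomputable def poolBlock (n Y : ℕ → ℝ) (l u v : ℕ) : ℝ :=
  if l ≤ v ∧ v ≤ u then pooledMean n Y l u else Y v

section PooledMean

variable {n Y : ℕ → ℝ} {i m t : ℕ}

lemma sum_Icc_split (f : ℕ → ℝ) (him : i ≤ m + 1) (hmt : m ≤ t) :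
    ∑ h ∈ Icc i t, f h = ∑ h ∈ Icc i m, f h + ∑ h ∈ Icc (m + 1) t, f h := by
  simp only [← Ico_add_one_right_eq_Icc]
  exact (sum_Ico_consecutive f him (by omega)).symm

lemma pooledWeight_pos (hn : ∀ h, i ≤ h → h ≤ t → 0 < n h) (hit : i ≤ t) :
    0 < pooledWeight n i t :=
  sum_pos (fun h hh => hn h (mem_Icc.1 hh).1 (mem_Icc.1 hh).2) ⟨i, mem_Icc.2 ⟨le_rfl, hit⟩⟩

lemma pooledWeight_mul_pooledMean (hW : pooledWeight n i t ≠ 0) :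
    pooledWeight n i t * pooledMean n Y i t = ∑ h ∈ Icc i t, n h * Y h :=
  mul_div_cancel₀ _ hW

lemma pooledMean_le_of_forall_le (hn : ∀ h, i ≤ h → h ≤ t → 0 < n h) (hit : i ≤ t) {c : ℝ}
    (hc : ∀ h, i ≤ h → h ≤ t → Y h ≤ c) : pooledMean n Y i t ≤ c := by
  rw [pooledMean, div_le_iff₀ (pooledWeight_pos hn hit), pooledWeight, mul_sum]
  refine sum_le_sum fun h hh => ?_
  obtain ⟨h1, h2⟩ := mem_Icc.1 hh
  nlinarith [hc h h1 h2, hn h h1 h2]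

lemma le_pooledMean_of_forall_le (hn : ∀ h, i ≤ h → h ≤ t → 0 < n h) (hit : i ≤ t) {c : ℝ}
    (hc : ∀ h, i ≤ h → h ≤ t → c ≤ Y h) : c ≤ pooledMean n Y i t := by
  rw [pooledMean, le_div_iff₀ (pooledWeight_pos hn hit), pooledWeight, mul_sum]
  refine sum_le_sum fun h hh => ?_
  obtain ⟨h1, h2⟩ := mem_Icc.1 hh
  nlinarith [hc h h1 h2, hn h h1 h2]

lemma pooledMean_split_balance (hn : ∀ h, i ≤ h → h ≤ t → 0 < n h) (him : i ≤ m) (hmt : m < t) :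
    pooledWeight n i m * (pooledMean n Y i m - pooledMean n Y i t)
      + pooledWeight n (m + 1) t * (pooledMean n Y (m + 1) t - pooledMean n Y i t) = 0 := by
  have hW := pooledWeight_mul_pooledMean (Y := Y) (pooledWeight_pos hn (him.trans hmt.le)).ne'
  have hW₁ := pooledWeight_mul_pooledMean (Y := Y)
    (pooledWeight_pos (fun h h1 h2 => hn h h1 (by omega)) him).ne'
  have hW₂ := pooledWeight_mul_pooledMean (Y := Y)
    (pooledWeight_pos (fun h h1 h2 => hn h (by omega) h2) hmt).ne'
  have hsplitW : pooledWeight n i t = pooledWeight n i m + pooledWeight n (m + 1) t :=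
    sum_Icc_split n (by omega) hmt.le
  rw [sum_Icc_split _ (by omega) hmt.le, hsplitW] at hW
  linear_combination hW₁ + hW₂ - hW

lemma pooledMean_tail_le_of_le_head (hn : ∀ h, i ≤ h → h ≤ t → 0 < n h) (him : i ≤ m)
    (hmt : m < t) (h : pooledMean n Y (m + 1) t ≤ pooledMean n Y i m) :
    pooledMean n Y (m + 1) t ≤ pooledMean n Y i t := by
  have := pooledMean_split_balance (Y := Y) hn him hmt
  have := pooledWeight_pos (fun h h1 h2 => hn h h1 (by omega)) him
  have := pooledWeight_pos (fun h h1 h2 => hn h (by omega) h2) hmt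
  nlinarith

lemma pooledMean_le_head_of_tail_le (hn : ∀ h, i ≤ h → h ≤ t → 0 < n h) (him : i ≤ m)
    (hmt : m < t) (h : pooledMean n Y (m + 1) t ≤ pooledMean n Y i t) :
    pooledMean n Y i t ≤ pooledMean n Y i m := by
  have := pooledMean_split_balance (Y := Y) hn him hmt
  have := pooledWeight_pos (fun h h1 h2 => hn h h1 (by omega)) him
  have := pooledWeight_pos (fun h h1 h2 => hn h (by omega) h2) hmt
  nlinarith

end PooledMean

/-- Antitonicity gives `Ȳ_{m+1,u} ≤ Z (m+1) ≤ Z m ≤ Ȳ_{l,m}`; splitting `[l, t]` and `[m+1, t]`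
at `m` and `u` turns this into the claim. -/
lemma pooledMean_le_or_lt_of_antitoneOn {n Z : ℕ → ℝ} {l m u t : ℕ}
    (hn : ∀ h, l ≤ h → h ≤ t → 0 < n h) (hZ : AntitoneOn Z (Set.Icc l u))
    (hlm : l ≤ m) (hmu : m < u) (hut : u ≤ t) :
    pooledMean n Z (m + 1) t ≤ pooledMean n Z l t ∨
      (u < t ∧ pooledMean n Z (m + 1) t < pooledMean n Z (u + 1) t) := by
  have hhead : Z m ≤ pooledMean n Z l m :=
    le_pooledMean_of_forall_le (fun h h1 h2 => hn h h1 (by omega)) hlm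
      fun h h1 h2 => hZ ⟨h1, by omega⟩ ⟨hlm, by omega⟩ h2
  have htail : pooledMean n Z (m + 1) u ≤ Z (m + 1) :=
    pooledMean_le_of_forall_le (fun h h1 h2 => hn h (by omega) (by omega)) hmu
      fun h h1 h2 => hZ ⟨by omega, by omega⟩ ⟨by omega, h2⟩ h1
  have hblock : pooledMean n Z (m + 1) u ≤ pooledMean n Z l m :=
    htail.trans ((hZ ⟨hlm, by omega⟩ ⟨by omega, hmu⟩ m.le_succ).trans hhead)
  suffices pooledMean n Z (m + 1) t ≤ pooledMean n Z l m ∨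
      (u < t ∧ pooledMean n Z (m + 1) t < pooledMean n Z (u + 1) t) from
    this.imp_left (pooledMean_tail_le_of_le_head hn hlm (by omega))
  rcases hut.eq_or_lt with rfl | hut
  · exact Or.inl hblock
  by_cases hlt : pooledMean n Z (m + 1) t < pooledMean n Z (u + 1) t
  · exact Or.inr ⟨hut, hlt⟩
  · exact Or.inl ((pooledMean_le_head_of_tail_le (fun h h1 h2 => hn h (by omega) h2) hmu hut
      (not_lt.1 hlt)).trans hblock)

section FirstArgmax

noncomputable def firstArgmax (f : ℕ → ℝ) (t : ℕ) : ℕ :=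
  sInf {j | 1 ≤ j ∧ j ≤ t ∧ ∀ j', 1 ≤ j' → j' ≤ t → f j' ≤ f j}

/-- `s` beats `x` in the order in which `firstArgmax` ranks indices: larger value first, then
smaller index. -/
def BeatenOutside (f : ℕ → ℝ) (t : ℕ) (P : ℕ → Prop) : Prop :=
  ∀ x, 1 ≤ x → x ≤ t → ¬ P x → ∃ s, P s ∧ 1 ≤ s ∧ s ≤ t ∧ (f x < f s ∨ (f x ≤ f s ∧ s < x))

variable {f g : ℕ → ℝ} {t : ℕ} {P : ℕ → Prop}

lemma firstIdx_eq_firstArgmax (n Y : ℕ → ℝ) (t : ℕ) :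
    firstIdx n Y t = firstArgmax (fun j => pooledMean n Y j t) t := rfl

lemma firstArgmax_zero (f : ℕ → ℝ) : firstArgmax f 0 = 0 :=
  Nat.sInf_eq_zero.2 <| .inr <| Set.eq_empty_of_forall_notMem fun _ hj => by
    have := hj.1.trans hj.2.1; omega

lemma firstArgmax_spec (ht : 1 ≤ t) :
    1 ≤ firstArgmax f t ∧ firstArgmax f t ≤ t ∧
      ∀ j', 1 ≤ j' → j' ≤ t → f j' ≤ f (firstArgmax f t) := by
  obtain ⟨b, hb, hmax⟩ := exists_max_image (Icc 1 t) f ⟨1, mem_Icc.2 ⟨le_rfl, ht⟩⟩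
  exact Nat.sInf_mem (s := {j | 1 ≤ j ∧ j ≤ t ∧ ∀ j', 1 ≤ j' → j' ≤ t → f j' ≤ f j})
    ⟨b, (mem_Icc.1 hb).1, (mem_Icc.1 hb).2, fun j' h1 h2 => hmax j' (mem_Icc.2 ⟨h1, h2⟩)⟩

lemma firstArgmax_le {j : ℕ} (h1 : 1 ≤ j) (hjt : j ≤ t)
    (hmax : ∀ j', 1 ≤ j' → j' ≤ t → f j' ≤ f j) : firstArgmax f t ≤ j :=
  Nat.sInf_le ⟨h1, hjt, hmax⟩

lemma firstArgmax_le_self (f : ℕ → ℝ) (t : ℕ) : firstArgmax f t ≤ t := by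
  rcases Nat.eq_zero_or_pos t with rfl | ht
  · exact (firstArgmax_zero f).le
  · exact (firstArgmax_spec ht).2.1

lemma BeatenOutside.firstArgmax_mem (hf : BeatenOutside f t P) (ht : 1 ≤ t) :
    P (firstArgmax f t) := by
  by_contra hP
  obtain ⟨h1, hmt, hmax⟩ := firstArgmax_spec (f := f) ht
  obtain ⟨s, -, hs1, hst, hlt | ⟨hle, hsm⟩⟩ := hf _ h1 hmt hP
  · exact (hmax s hs1 hst).not_gt hlt
  · exact (firstArgmax_le hs1 hst fun j' h1 h2 => (hmax j' h1 h2).trans hle).not_gt hsm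

lemma BeatenOutside.firstArgmax_le (hf : BeatenOutside f t P) (hg : BeatenOutside g t P)
    (hfg : ∀ x, 1 ≤ x → x ≤ t → P x → f x = g x) (ht : 1 ≤ t) :
    firstArgmax g t ≤ firstArgmax f t := by
  obtain ⟨h1, hmt, hmax⟩ := firstArgmax_spec (f := f) ht
  have hPm := hf.firstArgmax_mem ht
  refine _root_.firstArgmax_le h1 hmt fun j' hj1 hjt => ?_
  rw [← hfg _ h1 hmt hPm]
  by_cases hPj : P j'
  · exact (hfg j' hj1 hjt hPj).symm ▸ hmax j' hj1 hjt
  obtain ⟨s, hPs, hs1, hst, hbeat⟩ := hg j' hj1 hjt hPj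
  have hgs : g j' ≤ g s := hbeat.elim le_of_lt And.left
  exact hgs.trans ((hfg s hs1 hst hPs).symm ▸ hmax s hs1 hst)

lemma BeatenOutside.firstArgmax_eq (hf : BeatenOutside f t P) (hg : BeatenOutside g t P)
    (hfg : ∀ x, 1 ≤ x → x ≤ t → P x → f x = g x) : firstArgmax f t = firstArgmax g t := by
  rcases Nat.eq_zero_or_pos t with rfl | ht
  · rw [firstArgmax_zero, firstArgmax_zero]
  exact le_antisymm (hg.firstArgmax_le hf (fun x h1 h2 hP => (hfg x h1 h2 hP).symm) ht)
    (hf.firstArgmax_le hg hfg ht)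

end FirstArgmax

section PoolBlock

variable {n Y : ℕ → ℝ} {l u : ℕ}

lemma sum_mul_poolBlock (hW : pooledWeight n l u ≠ 0) {i t : ℕ}
    (hit : t < l ∨ u < i ∨ (i ≤ l ∧ u ≤ t)) :
    ∑ h ∈ Icc i t, n h * poolBlock n Y l u h = ∑ h ∈ Icc i t, n h * Y h := by
  have hout : ∀ h ∈ Icc i t \ Icc l u, n h * poolBlock n Y l u h = n h * Y h := by
    intro h hh
    rw [poolBlock, if_neg (by simpa only [mem_Icc] using (mem_sdiff.1 hh).2)]
  rcases or_assoc.2 hit with hdisj | ⟨hil, hut⟩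
  · exact sum_congr rfl fun h hh => hout h (by simp only [mem_sdiff, mem_Icc] at hh ⊢; omega)
  have hsub : Icc l u ⊆ Icc i t := Icc_subset_Icc hil hut
  have hblock : ∑ h ∈ Icc l u, n h * poolBlock n Y l u h = ∑ h ∈ Icc l u, n h * Y h := by
    rw [← pooledWeight_mul_pooledMean (Y := Y) hW, pooledWeight, sum_mul]
    exact sum_congr rfl fun h hh => by rw [poolBlock, if_pos (mem_Icc.1 hh)]
  rw [← sum_sdiff hsub, ← sum_sdiff hsub (f := fun h => n h * Y h), hblock, sum_congr rfl hout]

lemma pooledMean_poolBlock (hW : pooledWeight n l u ≠ 0) {i t : ℕ}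
    (hit : t < l ∨ u < i ∨ (i ≤ l ∧ u ≤ t)) :
    pooledMean n (poolBlock n Y l u) i t = pooledMean n Y i t := by
  rw [pooledMean, pooledMean, sum_mul_poolBlock hW hit]

lemma antitoneOn_poolBlock : AntitoneOn (poolBlock n Y l u) (Set.Icc l u) := by
  intro a ha b hb _
  rw [poolBlock, poolBlock, if_pos (Set.mem_Icc.1 ha), if_pos (Set.mem_Icc.1 hb)]

lemma beatenOutside_pooledMean {t : ℕ} (hn : ∀ h, 1 ≤ h → h ≤ t → 0 < n h)
    (hY : AntitoneOn Y (Set.Icc l u)) (hl : 1 ≤ l) (ht : t < l ∨ u ≤ t) :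
    BeatenOutside (fun x => pooledMean n Y x t) t (fun x => x ≤ l ∨ u < x) := by
  intro x hx1 hxt hx
  obtain ⟨m, rfl⟩ : ∃ m, x = m + 1 := ⟨x - 1, by omega⟩
  rcases pooledMean_le_or_lt_of_antitoneOn (m := m) (fun h h1 h2 => hn h (by omega) h2) hY
      (by omega) (by omega) (by omega) with h | ⟨hut, h⟩
  · exact ⟨l, .inl le_rfl, hl, by omega, .inr ⟨h, by omega⟩⟩
  · exact ⟨u + 1, .inr (by omega), by omega, hut, .inl h⟩

end PoolBlock

section Sdmmsa

variable {n Y : ℕ → ℝ} {k l u : ℕ}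

lemma firstIdx_poolBlock (hn : ∀ h, 1 ≤ h → h ≤ k → 0 < n h) (hl : 1 ≤ l)
    (hY : AntitoneOn Y (Set.Icc l u)) (hW : pooledWeight n l u ≠ 0) {t : ℕ} (htk : t ≤ k)
    (ht : t < l ∨ u ≤ t) :
    firstIdx n (poolBlock n Y l u) t = firstIdx n Y t ∧
      (firstIdx n Y t ≤ l ∨ u < firstIdx n Y t) := by
  rcases Nat.eq_zero_or_pos t with rfl | ht1
  · simp only [firstIdx_eq_firstArgmax, firstArgmax_zero, zero_le, true_or, and_self]
  have hnt : ∀ h, 1 ≤ h → h ≤ t → 0 < n h := fun h h1 h2 => hn h h1 (h2.trans htk)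
  have hbeat := beatenOutside_pooledMean hnt hY hl ht
  refine ⟨(beatenOutside_pooledMean hnt antitoneOn_poolBlock hl ht).firstArgmax_eq hbeat
    fun x _ _ hx => pooledMean_poolBlock hW (by omega), hbeat.firstArgmax_mem ht1⟩

theorem sdmmsaAux_poolBlock (hn : ∀ h, 1 ≤ h → h ≤ k → 0 < n h) (hl : 1 ≤ l) (hlu : l ≤ u)
    (huk : u ≤ k) (hY : AntitoneOn Y (Set.Icc l u)) (fuel t i : ℕ) (htk : t ≤ k)
    (ht : t < l ∨ u ≤ t) :
    sdmmsaAux n (poolBlock n Y l u) fuel t i = sdmmsaAux n Y fuel t i := by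
  have hW : pooledWeight n l u ≠ 0 :=
    (pooledWeight_pos (fun h h1 h2 => hn h (by omega) (by omega)) hlu).ne'
  induction fuel generalizing t with
  | zero => rfl
  | succ fuel ih =>
    obtain ⟨hfirst, hsel⟩ := firstIdx_poolBlock hn hl hY hW htk ht
    have hle : firstIdx n Y t ≤ t := firstArgmax_le_self _ t
    rw [sdmmsaAux, sdmmsaAux, hfirst]
    split_ifs
    · exact pooledMean_poolBlock hW (by omega)
    · exact ih _ (by omega) (by omega)

theorem muhat_poolBlock (hn : ∀ h, 1 ≤ h → h ≤ k → 0 < n h) (hl : 1 ≤ l) (hlu : l ≤ u)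
    (huk : u ≤ k) (hY : AntitoneOn Y (Set.Icc l u)) (i : ℕ) :
    muhat n (poolBlock n Y l u) k i = muhat n Y k i :=
  sdmmsaAux_poolBlock hn hl hlu huk hY k k i le_rfl (.inr huk)

end Sdmmsa

lemma antitoneOn_of_two_levels {Y : ℕ → ℝ} {l j u : ℕ} (hlow : ∀ i, l ≤ i → i ≤ j → Y i = Y j)
    (hhigh : ∀ i, j + 1 ≤ i → i ≤ u → Y i = Y (j + 1)) (hdrop : Y (j + 1) ≤ Y j) :
    AntitoneOn Y (Set.Icc l u) := by
  intro a ha b hb hab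
  rcases le_or_gt b j with hbj | hbj
  · rw [hlow a ha.1 (hab.trans hbj), hlow b (ha.1.trans hab) hbj]
  rw [hhigh b hbj hb.2]
  rcases le_or_gt a j with haj | haj
  · rwa [hlow a ha.1 haj]
  · rw [hhigh a haj ha.2]

theorem sdmmsa_pava_step_invariant_general (k : ℕ) (n Y : ℕ → ℝ)
    (hn : ∀ h, 1 ≤ h → h ≤ k → 0 < n h)
    (j : ℕ) (hviol : Y (j + 1) < Y j)
    (jl ju : ℕ)
    (hjl1 : 1 ≤ jl) (hjlj : jl ≤ j)
    (hjlconst : ∀ i, jl ≤ i → i ≤ j → Y i = Y j)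
    (hju1 : j + 1 ≤ ju) (hjuk : ju ≤ k)
    (hjuconst : ∀ i, j + 1 ≤ i → i ≤ ju → Y i = Y (j + 1)) :
    ∀ i, 1 ≤ i → i ≤ k →
      muhat n Y k i =
        muhat n (fun v => if jl ≤ v ∧ v ≤ ju then pooledMean n Y jl ju else Y v) k i :=
  fun i _ _ => (muhat_poolBlock hn hjl1 (by omega) hjuk
    (antitoneOn_of_two_levels hjlconst hjuconst hviol.le) i).symm

/-- key step of Theorem 2, eq. (2.17): the SDMMSA estimates are invariant
under one PAVA pooling step.  If `Ȳ_j > Ȳ_{j+1}`, `j_l` is the smallest integer with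
`Ȳ_i = Ȳ_j` on `[j_l, j]`, `j_u` is the largest integer with `Ȳ_i = Ȳ_{j+1}` on
`[j+1, j_u]`, and the values on `[j_l, j_u]` are all replaced by the pooled mean
`Ȳ_{j_l, j_u}`, then the SDMMSA estimates do not change. -/
theorem sdmmsa_pava_step_invariant (k : ℕ) (hk : 1 ≤ k) (n Y : ℕ → ℝ)
    (hn : ∀ h, 1 ≤ h → h ≤ k → 0 < n h)
    (j : ℕ) (hj1 : 1 ≤ j) (hjk : j + 1 ≤ k) (hviol : Y (j + 1) < Y j)
    (jl ju : ℕ)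
    (hjl1 : 1 ≤ jl) (hjlj : jl ≤ j)
    (hjlconst : ∀ i, jl ≤ i → i ≤ j → Y i = Y j)
    (hjlmin : ∀ i', 1 ≤ i' → i' ≤ j → (∀ i, i' ≤ i → i ≤ j → Y i = Y j) → jl ≤ i')
    (hju1 : j + 1 ≤ ju) (hjuk : ju ≤ k)
    (hjuconst : ∀ i, j + 1 ≤ i → i ≤ ju → Y i = Y (j + 1))
    (hjumax : ∀ u', u' ≤ k → (∀ i, j + 1 ≤ i → i ≤ u' → Y i = Y (j + 1)) → u' ≤ ju) :
    ∀ i, 1 ≤ i → i ≤ k →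
      muhat n Y k i =
        muhat n (fun v => if jl ≤ v ∧ v ≤ ju then pooledMean n Y jl ju else Y v) k i :=
  sdmmsa_pava_step_invariant_general k n Y hn j hviol jl ju hjl1 hjlj hjlconst hju1 hjuk hjuconst
end

section
/- (Theorem 3, deterministic part) For each i and j in [1,k], the SDMMSA estimate μ̂_{i,k}, viewed as a function of the j-th data value Ȳ_j with all other data values Ȳ_{j'} (j' ≠ j) and all weights held fixed, is nondecreasing: if y ≤ y' then μ̂_{i,k}(Ȳ_1,…,Ȳ_{j−1}, y, Ȳ_{j+1},…,Ȳ_k) ≤ μ̂_{i,k}(Ȳ_1,…,Ȳ_{j−1}, y', Ȳ_{j+1},…,Ȳ_k). -/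
open Finset

/-!
Unrolling the step-down recursion gives the min–max formula
`μ̂_i = min_{i ≤ b ≤ k} max_{1 ≤ a ≤ b} Ȳ_{a,b}`, as for isotonic regression. One step of the
recursion on `[1, t]` with first maximiser `i₁` contributes the block `[i₁, t]`: splitting it at
any `b ≥ i₁` shows `Ȳ_{i₁,t} ≤ Ȳ_{i₁,b}`, while every block `[a, i₁ - 1]` has mean below
`Ȳ_{i₁,t}` because `Ȳ_{a,t} < Ȳ_{i₁,t}`. Each `Ȳ_{a,b}` is an average of the data with positive
weights, hence nondecreasing in every `Ȳ_j`, and so are maxima and minima of such averages.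
-/

section PooledMean

variable {n : ℕ → ℝ} {k : ℕ}

lemma sum_Icc_add_sum_Icc (f : ℕ → ℝ) {a b c : ℕ} (hab : a ≤ b + 1) (hbc : b ≤ c) :
    ∑ h ∈ Icc a b, f h + ∑ h ∈ Icc (b + 1) c, f h = ∑ h ∈ Icc a c, f h := by
  simpa only [Finset.Ico_add_one_right_eq_Icc] using
    Finset.sum_Ico_consecutive f hab (by omega : b + 1 ≤ c + 1)

lemma pooledWeight_pos_s7 (hn : ∀ h, 1 ≤ h → h ≤ k → 0 < n h) {a b : ℕ}
    (ha : 1 ≤ a) (hab : a ≤ b) (hbk : b ≤ k) : 0 < pooledWeight n a b :=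
  Finset.sum_pos (fun h hh => hn h (ha.trans (mem_Icc.1 hh).1) ((mem_Icc.1 hh).2.trans hbk))
    ⟨a, mem_Icc.2 ⟨le_rfl, hab⟩⟩

/-- `Ȳ_{a,c}` is the `n_{a,b} : n_{b+1,c}` weighted average of `Ȳ_{a,b}` and `Ȳ_{b+1,c}`. -/
lemma pooledWeight_mul_sub_pooledMean (hn : ∀ h, 1 ≤ h → h ≤ k → 0 < n h) (Y : ℕ → ℝ)
    {a b c : ℕ} (ha : 1 ≤ a) (hab : a ≤ b) (hbc : b < c) (hck : c ≤ k) :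
    pooledWeight n a b * (pooledMean n Y a b - pooledMean n Y a c)
      = pooledWeight n (b + 1) c * (pooledMean n Y a c - pooledMean n Y (b + 1) c) := by
  have hW : pooledWeight n a b + pooledWeight n (b + 1) c = pooledWeight n a c :=
    sum_Icc_add_sum_Icc _ (by omega) hbc.le
  have hS := sum_Icc_add_sum_Icc (fun h => n h * Y h) (c := c) (by omega : a ≤ b + 1) hbc.le
  have mul_mean : ∀ {a b}, 1 ≤ a → a ≤ b → b ≤ k →
      pooledWeight n a b * pooledMean n Y a b = ∑ h ∈ Icc a b, n h * Y h :=
    fun ha hab hbk => mul_div_cancel₀ _ (pooledWeight_pos_s7 hn ha hab hbk).ne'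
  have hab' := mul_mean ha hab (by omega)
  have hbc' := mul_mean (a := b + 1) (by omega) hbc hck
  have hac' := mul_mean ha (by omega) hck
  linear_combination hab' + hbc' - hac' + hS - pooledMean n Y a c * hW

lemma pooledMean_le_of_pooledMean_right_le (hn : ∀ h, 1 ≤ h → h ≤ k → 0 < n h) (Y : ℕ → ℝ)
    {a b c : ℕ} (ha : 1 ≤ a) (hab : a ≤ b) (hbc : b < c) (hck : c ≤ k)
    (h : pooledMean n Y (b + 1) c ≤ pooledMean n Y a c) :
    pooledMean n Y a c ≤ pooledMean n Y a b := by
  have key := pooledWeight_mul_sub_pooledMean hn Y ha hab hbc hck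
  have := mul_nonneg (pooledWeight_pos_s7 hn (a := b + 1) (by omega) hbc hck).le (sub_nonneg.2 h)
  rw [← key, mul_nonneg_iff_of_pos_left (pooledWeight_pos_s7 hn ha hab (by omega))] at this
  exact sub_nonneg.1 this

lemma pooledMean_lt_of_lt_pooledMean_right (hn : ∀ h, 1 ≤ h → h ≤ k → 0 < n h) (Y : ℕ → ℝ)
    {a b c : ℕ} (ha : 1 ≤ a) (hab : a ≤ b) (hbc : b < c) (hck : c ≤ k)
    (h : pooledMean n Y a c < pooledMean n Y (b + 1) c) :
    pooledMean n Y a b < pooledMean n Y (b + 1) c := by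
  have key := pooledWeight_mul_sub_pooledMean hn Y ha hab hbc hck
  have := mul_neg_of_pos_of_neg (pooledWeight_pos_s7 hn (a := b + 1) (by omega) hbc hck) (sub_neg.2 h)
  rw [← key] at this
  linarith [neg_of_mul_neg_right this (pooledWeight_pos_s7 hn ha hab (by omega)).le]

lemma pooledMean_mono {a b : ℕ} (hn : ∀ h ∈ Icc a b, 0 ≤ n h) {Y Y' : ℕ → ℝ} (hY : Y ≤ Y') :
    pooledMean n Y a b ≤ pooledMean n Y' a b :=
  div_le_div_of_nonneg_right
    (Finset.sum_le_sum fun h hh => mul_le_mul_of_nonneg_left (hY h) (hn h hh))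
    (Finset.sum_nonneg hn)

end PooledMean

section FirstIdx

variable (n Y : ℕ → ℝ) {t : ℕ}

lemma firstIdx_spec (ht : 1 ≤ t) :
    1 ≤ firstIdx n Y t ∧ firstIdx n Y t ≤ t ∧
      ∀ j, 1 ≤ j → j ≤ t → pooledMean n Y j t ≤ pooledMean n Y (firstIdx n Y t) t := by
  refine Nat.sInf_mem (s := {j | 1 ≤ j ∧ j ≤ t ∧
    ∀ j', 1 ≤ j' → j' ≤ t → pooledMean n Y j' t ≤ pooledMean n Y j t}) ?_
  obtain ⟨x, hx, hmax⟩ := Finset.exists_max_image (Icc 1 t) (fun j => pooledMean n Y j t)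
    ⟨1, mem_Icc.2 ⟨le_rfl, ht⟩⟩
  exact ⟨x, (mem_Icc.1 hx).1, (mem_Icc.1 hx).2, fun j hj1 hjt => hmax j (mem_Icc.2 ⟨hj1, hjt⟩)⟩

lemma pooledMean_lt_of_lt_firstIdx (ht : 1 ≤ t) {a : ℕ} (ha : 1 ≤ a)
    (hat : a < firstIdx n Y t) : pooledMean n Y a t < pooledMean n Y (firstIdx n Y t) t := by
  have hnot : ¬(1 ≤ a ∧ a ≤ t ∧ ∀ j, 1 ≤ j → j ≤ t → pooledMean n Y j t ≤ pooledMean n Y a t) :=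
    Nat.notMem_of_lt_sInf hat
  push Not at hnot
  obtain ⟨j, hj1, hjt, hlt⟩ := hnot ha (by have := (firstIdx_spec n Y ht).2.1; omega)
  exact hlt.trans_le ((firstIdx_spec n Y ht).2.2 j hj1 hjt)

end FirstIdx

/-- `max_{1 ≤ a ≤ b} Ȳ_{a,b}`; `b` is inserted only to make the index set nonempty when `b = 0`. -/
noncomputable def maxPooledMean (n Y : ℕ → ℝ) (b : ℕ) : ℝ :=
  (insert b (Icc 1 b)).sup' (insert_nonempty _ _) fun a => pooledMean n Y a b

/-- `min_{i ≤ b ≤ t} max_{1 ≤ a ≤ b} Ȳ_{a,b}`; `t` is inserted only to make the index set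
nonempty when `t < i`. -/
noncomputable def minMaxPooledMean (n Y : ℕ → ℝ) (i t : ℕ) : ℝ :=
  (insert t (Icc i t)).inf' (insert_nonempty _ _) (maxPooledMean n Y)

section MinMax

variable {n : ℕ → ℝ} {k : ℕ} (Y : ℕ → ℝ)

lemma le_maxPooledMean {a b : ℕ} (ha : 1 ≤ a) (hab : a ≤ b) :
    pooledMean n Y a b ≤ maxPooledMean n Y b :=
  le_sup' (fun a => pooledMean n Y a b) (mem_insert_of_mem (mem_Icc.2 ⟨ha, hab⟩))

lemma maxPooledMean_le_iff {b : ℕ} (hb : 1 ≤ b) {x : ℝ} :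
    maxPooledMean n Y b ≤ x ↔ ∀ a ∈ Icc 1 b, pooledMean n Y a b ≤ x := by
  rw [maxPooledMean, sup'_le_iff, insert_eq_of_mem (mem_Icc.2 ⟨hb, le_rfl⟩)]

lemma maxPooledMean_lt_iff {b : ℕ} (hb : 1 ≤ b) {x : ℝ} :
    maxPooledMean n Y b < x ↔ ∀ a ∈ Icc 1 b, pooledMean n Y a b < x := by
  rw [maxPooledMean, sup'_lt_iff, insert_eq_of_mem (mem_Icc.2 ⟨hb, le_rfl⟩)]

lemma minMaxPooledMean_le {i t b : ℕ} (hib : i ≤ b) (hbt : b ≤ t) :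
    minMaxPooledMean n Y i t ≤ maxPooledMean n Y b :=
  inf'_le (maxPooledMean n Y) (mem_insert_of_mem (mem_Icc.2 ⟨hib, hbt⟩))

lemma le_minMaxPooledMean_iff {i t : ℕ} (hit : i ≤ t) {x : ℝ} :
    x ≤ minMaxPooledMean n Y i t ↔ ∀ b ∈ Icc i t, x ≤ maxPooledMean n Y b := by
  rw [minMaxPooledMean, le_inf'_iff, insert_eq_of_mem (mem_Icc.2 ⟨hit, le_rfl⟩)]

lemma maxPooledMean_eq_pooledMean_firstIdx {t : ℕ} (ht : 1 ≤ t) :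
    maxPooledMean n Y t = pooledMean n Y (firstIdx n Y t) t := by
  obtain ⟨h1, h2, hmax⟩ := firstIdx_spec n Y ht
  exact le_antisymm ((maxPooledMean_le_iff Y ht).2 fun a ha => hmax a (mem_Icc.1 ha).1
    (mem_Icc.1 ha).2) (le_maxPooledMean Y h1 h2)

lemma pooledMean_firstIdx_le_maxPooledMean (hn : ∀ h, 1 ≤ h → h ≤ k → 0 < n h) {t b : ℕ}
    (ht : 1 ≤ t) (htk : t ≤ k) (hb : firstIdx n Y t ≤ b) (hbt : b ≤ t) :
    pooledMean n Y (firstIdx n Y t) t ≤ maxPooledMean n Y b := by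
  obtain ⟨h1, -, hmax⟩ := firstIdx_spec n Y ht
  rcases hbt.eq_or_lt with rfl | hbt
  · exact (maxPooledMean_eq_pooledMean_firstIdx Y ht).ge
  · exact (pooledMean_le_of_pooledMean_right_le hn Y h1 hb hbt htk
      (hmax (b + 1) (by omega) hbt)).trans (le_maxPooledMean Y h1 hb)

lemma maxPooledMean_lt_pooledMean_firstIdx (hn : ∀ h, 1 ≤ h → h ≤ k → 0 < n h) {t b : ℕ}
    (ht : 1 ≤ t) (htk : t ≤ k) (hb1 : 1 ≤ b) (hb : b + 1 = firstIdx n Y t) :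
    maxPooledMean n Y b < pooledMean n Y (firstIdx n Y t) t := by
  have hbt : b < t := by have := (firstIdx_spec n Y ht).2.1; omega
  refine (maxPooledMean_lt_iff Y hb1).2 fun a ha => ?_
  obtain ⟨ha1, hab⟩ := mem_Icc.1 ha
  have hat := pooledMean_lt_of_lt_firstIdx n Y ht ha1 (by omega : a < firstIdx n Y t)
  rw [← hb] at hat ⊢
  exact pooledMean_lt_of_lt_pooledMean_right hn Y ha1 hab hbt htk hat

lemma minMaxPooledMean_eq_of_firstIdx_le (hn : ∀ h, 1 ≤ h → h ≤ k → 0 < n h) {i t : ℕ}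
    (ht : 1 ≤ t) (htk : t ≤ k) (hi : firstIdx n Y t ≤ i) (hit : i ≤ t) :
    minMaxPooledMean n Y i t = pooledMean n Y (firstIdx n Y t) t := by
  refine le_antisymm ?_ ((le_minMaxPooledMean_iff Y hit).2 fun b hb =>
    pooledMean_firstIdx_le_maxPooledMean Y hn ht htk (hi.trans (mem_Icc.1 hb).1) (mem_Icc.1 hb).2)
  exact (minMaxPooledMean_le Y hit le_rfl).trans (maxPooledMean_eq_pooledMean_firstIdx Y ht).le

lemma minMaxPooledMean_eq_of_lt_firstIdx (hn : ∀ h, 1 ≤ h → h ≤ k → 0 < n h) {i t : ℕ}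
    (ht : 1 ≤ t) (htk : t ≤ k) (hi1 : 1 ≤ i) (hi : i < firstIdx n Y t) :
    minMaxPooledMean n Y i t = minMaxPooledMean n Y i (firstIdx n Y t - 1) := by
  obtain ⟨-, hi₁t, -⟩ := firstIdx_spec n Y ht
  have hgap := maxPooledMean_lt_pooledMean_firstIdx Y hn ht htk (by omega : 1 ≤ firstIdx n Y t - 1)
    (by omega)
  refine le_antisymm ((le_minMaxPooledMean_iff Y (by omega)).2 fun b hb =>
    minMaxPooledMean_le Y (mem_Icc.1 hb).1 (by have := (mem_Icc.1 hb).2; omega))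
    ((le_minMaxPooledMean_iff Y (by omega)).2 fun b hb => ?_)
  obtain ⟨hib, hbt⟩ := mem_Icc.1 hb
  by_cases hb₁ : b ≤ firstIdx n Y t - 1
  · exact minMaxPooledMean_le Y hib hb₁
  · calc minMaxPooledMean n Y i (firstIdx n Y t - 1)
        ≤ maxPooledMean n Y (firstIdx n Y t - 1) := minMaxPooledMean_le Y (by omega) le_rfl
      _ ≤ pooledMean n Y (firstIdx n Y t) t := hgap.le
      _ ≤ maxPooledMean n Y b := pooledMean_firstIdx_le_maxPooledMean Y hn ht htk (by omega) hbt

lemma sdmmsaAux_eq_minMaxPooledMean (hn : ∀ h, 1 ≤ h → h ≤ k → 0 < n h) {t fuel i : ℕ}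
    (hi : 1 ≤ i) (hit : i ≤ t) (htk : t ≤ k) (hfuel : t ≤ fuel) :
    sdmmsaAux n Y fuel t i = minMaxPooledMean n Y i t := by
  induction t using Nat.strong_induction_on generalizing fuel with
  | _ t ih =>
  obtain ⟨fuel, rfl⟩ : ∃ f, fuel = f + 1 := ⟨fuel - 1, by omega⟩
  have ht : 1 ≤ t := hi.trans hit
  have hi₁t := (firstIdx_spec n Y ht).2.1
  rw [sdmmsaAux]
  split_ifs with hi₁
  · exact (minMaxPooledMean_eq_of_firstIdx_le Y hn ht htk hi₁ hit).symm
  · rw [minMaxPooledMean_eq_of_lt_firstIdx Y hn ht htk hi (by omega)]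
    exact ih _ (by omega) (by omega) (by omega) (by omega)

lemma muhat_eq_minMaxPooledMean (hn : ∀ h, 1 ≤ h → h ≤ k → 0 < n h) {i : ℕ} (hi : 1 ≤ i)
    (hik : i ≤ k) : muhat n Y k i = minMaxPooledMean n Y i k :=
  sdmmsaAux_eq_minMaxPooledMean Y hn hi hik le_rfl le_rfl

end MinMax

section Monotone

variable {n Y Y' : ℕ → ℝ} {k : ℕ}

lemma maxPooledMean_mono (hn : ∀ h, 1 ≤ h → h ≤ k → 0 < n h) (hY : Y ≤ Y') {b : ℕ}
    (hb : 1 ≤ b) (hbk : b ≤ k) : maxPooledMean n Y b ≤ maxPooledMean n Y' b :=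
  (maxPooledMean_le_iff Y hb).2 fun _ ha =>
    have ⟨ha1, hab⟩ := mem_Icc.1 ha
    (pooledMean_mono (fun h hh => (hn h (ha1.trans (mem_Icc.1 hh).1)
      ((mem_Icc.1 hh).2.trans hbk)).le) hY).trans (le_maxPooledMean Y' ha1 hab)

lemma minMaxPooledMean_mono (hn : ∀ h, 1 ≤ h → h ≤ k → 0 < n h) (hY : Y ≤ Y') {i t : ℕ}
    (hi : 1 ≤ i) (hit : i ≤ t) (htk : t ≤ k) :
    minMaxPooledMean n Y i t ≤ minMaxPooledMean n Y' i t :=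
  (le_minMaxPooledMean_iff Y' hit).2 fun _ hb =>
    (minMaxPooledMean_le Y (mem_Icc.1 hb).1 (mem_Icc.1 hb).2).trans
      (maxPooledMean_mono hn hY (hi.trans (mem_Icc.1 hb).1) ((mem_Icc.1 hb).2.trans htk))

lemma muhat_mono (hn : ∀ h, 1 ≤ h → h ≤ k → 0 < n h) (hY : Y ≤ Y') {i : ℕ} (hi : 1 ≤ i)
    (hik : i ≤ k) : muhat n Y k i ≤ muhat n Y' k i := by
  rw [muhat_eq_minMaxPooledMean Y hn hi hik, muhat_eq_minMaxPooledMean Y' hn hi hik]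
  exact minMaxPooledMean_mono hn hY hi hik le_rfl

end Monotone

theorem sdmmsa_coordinatewise_monotone_general (k : ℕ) (n Y : ℕ → ℝ)
    (hn : ∀ h, 1 ≤ h → h ≤ k → 0 < n h)
    (i j : ℕ) (hi1 : 1 ≤ i) (hik : i ≤ k)
    (y y' : ℝ) (hyy' : y ≤ y') :
    muhat n (Function.update Y j y) k i ≤ muhat n (Function.update Y j y') k i :=
  muhat_mono hn (update_le_update_iff'.2 hyy') hi1 hik

/-- Theorem 3, deterministic part: for `i, j ∈ [1,k]`, the SDMMSA estimate
`μ̂_{i,k}`, as a function of the `j`-th data value with everything else held fixed, is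
nondecreasing. -/
theorem sdmmsa_coordinatewise_monotone (k : ℕ) (hk : 1 ≤ k) (n Y : ℕ → ℝ)
    (hn : ∀ h, 1 ≤ h → h ≤ k → 0 < n h)
    (i j : ℕ) (hi1 : 1 ≤ i) (hik : i ≤ k) (hj1 : 1 ≤ j) (hjk : j ≤ k)
    (y y' : ℝ) (hyy' : y ≤ y') :
    muhat n (Function.update Y j y) k i ≤ muhat n (Function.update Y j y') k i :=
  sdmmsa_coordinatewise_monotone_general k n Y hn i j hi1 hik y y' hyy'
end
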